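/- arXiv:2007.03959 — 3 statements merged into one kernel-verified Lean document; each statement's English description precedes it below -/
import Mathlib

section
/- Let G be a finite graph and τ a threshold function satisfying τ(u) ∈ {0, 1, deg_G(u)} for every vertex u. Let U be the vertex set of a connected component of order at least 2 of the induced subgraph G[{u : τ(u) = deg_G(u)}], let G' = G − N_G[U], and define τ'(u) = max{0, τ(u) − |N_G(u) ∩ N_G[U]|} for u ∈ V(G'). Then τ'(u) ∈ {0, 1, deg_{G'}(u)} for every vertex u of G'. -/
open Finset

/-- The non-monotone activation process on `(G, τ)` starting with `X`:
`X_t = {u : |N_G(u) ∩ X_{t-1}| ≥ τ(u)}` for `t ≥ 1`. -/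
def activation {V : Type*} (G : SimpleGraph V) [Fintype V] [DecidableEq V]
    [DecidableRel G.Adj] (τ : V → ℤ) (X : Finset V) : ℕ → Finset V
  | 0 => X
  | t + 1 => Finset.univ.filter
      (fun u => τ u ≤ ((G.neighborFinset u ∩ activation G τ X t).card : ℤ))

/-- `X` is a non-monotone target set for `(G, τ)`. -/
def IsTargetSet {V : Type*} (G : SimpleGraph V) [Fintype V] [DecidableEq V]
    [DecidableRel G.Adj] (τ : V → ℤ) (X : Finset V) : Prop :=
  ∃ t₀ : ℕ, ∀ t ≥ t₀, activation G τ X t = Finset.univ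

/-- Open neighbourhood of a set of vertices: `N_G(S)`. -/
def openNbhd {V : Type*} (G : SimpleGraph V) (S : Set V) : Set V :=
  {v | v ∉ S ∧ ∃ u ∈ S, G.Adj u v}

/-- Closed neighbourhood of a set of vertices: `N_G[S]`. -/
def closedNbhd {V : Type*} (G : SimpleGraph V) (S : Set V) : Set V :=
  S ∪ openNbhd G S

/-- Closed neighbourhood, as a finset. -/
def closedNbhdFinset {V : Type*} (G : SimpleGraph V) [Fintype V] [DecidableEq V]
    [DecidableRel G.Adj] (U : Finset V) : Finset V :=
  U ∪ Finset.univ.filter (fun v => ∃ u ∈ U, G.Adj u v)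

/-- `U` is the vertex set of a connected component of the subgraph of `G` induced by `S`. -/
def IsComponentOf {V : Type*} (G : SimpleGraph V) (S U : Set V) : Prop :=
  U ⊆ S ∧ U.Nonempty ∧ (G.induce U).Connected ∧
    ∀ u ∈ U, ∀ v ∈ S, G.Adj u v → v ∈ U

/-- The subgraph of `G` induced by `S`, as a graph on the subtype `S`. -/
def restrict {V : Type*} (G : SimpleGraph V) (S : Set V) : SimpleGraph S where
  Adj a b := G.Adj a b
  symm := ⟨fun _ _ h => G.adj_symm h⟩
  loopless := ⟨fun a h => G.irrefl h⟩

instance {V : Type*} (G : SimpleGraph V) (S : Set V) [h : DecidableRel G.Adj] :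
    DecidableRel (restrict G S).Adj := fun a b => h a b

lemma degree_restrict_compl {V : Type*} [Fintype V] [DecidableEq V] (G : SimpleGraph V)
    [DecidableRel G.Adj] (T : Finset V) (u : V) (hu : u ∉ T) :
    (restrict G {v | v ∉ T}).degree ⟨u, hu⟩ = #(G.neighborFinset u \ T) := by
  refine card_bij (fun b _ => (b : V)) ?_ (fun _ _ _ _ h => Subtype.ext h) ?_
  · intro b hb
    have hadj : G.Adj u b := ((restrict G {v | v ∉ T}).mem_neighborFinset _ _).1 hb
    exact mem_sdiff.2 ⟨(G.mem_neighborFinset u b).2 hadj, b.2⟩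
  · intro b hb
    rw [mem_sdiff, SimpleGraph.mem_neighborFinset] at hb
    exact ⟨⟨b, hb.2⟩, (SimpleGraph.mem_neighborFinset _ _ _).2 hb.1, rfl⟩

/-- A threshold equal to the degree drops by exactly the number of neighbours in `T`, which
leaves the degree in `G - T`. -/
lemma residual_threshold_mem {V : Type*} [Fintype V] [DecidableEq V] (G : SimpleGraph V)
    [DecidableRel G.Adj] (τ : V → ℤ) (T : Finset V) (u : V) (hu : u ∉ T)
    (hτu : τ u = 0 ∨ τ u = 1 ∨ τ u = (G.degree u : ℤ)) :
    max 0 (τ u - (#(G.neighborFinset u ∩ T) : ℤ)) = 0 ∨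
      max 0 (τ u - (#(G.neighborFinset u ∩ T) : ℤ)) = 1 ∨
      max 0 (τ u - (#(G.neighborFinset u ∩ T) : ℤ)) =
        ((restrict G {v | v ∉ T}).degree ⟨u, hu⟩ : ℤ) := by
  have hsplit : #(G.neighborFinset u ∩ T) + #(G.neighborFinset u \ T) = G.degree u :=
    card_inter_add_card_sdiff _ _
  rw [degree_restrict_compl G T u hu]
  omega

theorem stmt_6_general {V : Type*} [Fintype V] [DecidableEq V] (G : SimpleGraph V)
    [DecidableRel G.Adj] (τ : V → ℤ)
    (hτ : ∀ u, τ u = 0 ∨ τ u = 1 ∨ τ u = (G.degree u : ℤ))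
    (U : Finset V) :
    ∀ (u : V) (hu : u ∉ closedNbhdFinset G U),
      max 0 (τ u - ((G.neighborFinset u ∩ closedNbhdFinset G U).card : ℤ)) = 0 ∨
      max 0 (τ u - ((G.neighborFinset u ∩ closedNbhdFinset G U).card : ℤ)) = 1 ∨
      max 0 (τ u - ((G.neighborFinset u ∩ closedNbhdFinset G U).card : ℤ)) =
        ((restrict G {v | v ∉ closedNbhdFinset G U}).degree ⟨u, hu⟩ : ℤ) :=
  fun u hu => residual_threshold_mem G τ _ u hu (hτ u)

theorem stmt_6 {V : Type*} [Fintype V] [DecidableEq V] (G : SimpleGraph V)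
    [DecidableRel G.Adj] (τ : V → ℤ)
    (hτ : ∀ u, τ u = 0 ∨ τ u = 1 ∨ τ u = (G.degree u : ℤ))
    (U : Finset V)
    (hU : IsComponentOf G {u | τ u = (G.degree u : ℤ)} ↑U)
    (hcard : 2 ≤ U.card) :
    ∀ (u : V) (hu : u ∉ closedNbhdFinset G U),
      max 0 (τ u - ((G.neighborFinset u ∩ closedNbhdFinset G U).card : ℤ)) = 0 ∨
      max 0 (τ u - ((G.neighborFinset u ∩ closedNbhdFinset G U).card : ℤ)) = 1 ∨
      max 0 (τ u - ((G.neighborFinset u ∩ closedNbhdFinset G U).card : ℤ)) =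
        ((restrict G {v | v ∉ closedNbhdFinset G U}).degree ⟨u, hu⟩ : ℤ) :=
  stmt_6_general G τ hτ U
end

section
/- Let G be a finite graph and τ a threshold function with τ(u) ∈ {0,1,deg_G(u)} for all u, such that no edge of G joins two vertices u,v with τ(u)=deg_G(u) and τ(v)=deg_G(v). Let U be the vertex set of a component of order ≥ 2 of G[{u : τ(u) ∈ {0,1}}] with τ(u)=1 for all u ∈ U. If X is a non-monotone target set for (G,τ), then X ∩ N_G[U] ≠ ∅. -/
open Finset

/-!
Vertices of `U` have threshold `1` and all their neighbours in `N_G[U]`, while a vertex of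
`N_G(U)` has threshold equal to its degree and a neighbour in `U`. So a vertex of `N_G[U]` can
only become active if some vertex of `N_G[U]` was active one step earlier; if `X` misses
`N_G[U]`, the process never reaches the nonempty set `U`.
-/

namespace SimpleGraph

variable {V : Type*} [Fintype V] [DecidableEq V] (G : SimpleGraph V) [DecidableRel G.Adj]

theorem disjoint_activation_of_card_neighborFinset_sdiff_lt {τ : V → ℤ} {C X : Finset V}
    (hC : ∀ v ∈ C, (#(G.neighborFinset v \ C) : ℤ) < τ v) (hX : Disjoint X C) :
    ∀ t, Disjoint (activation G τ X t) C := by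
  intro t
  induction t with
  | zero => exact hX
  | succ t ih =>
    refine Finset.disjoint_right.2 fun v hv hact => ?_
    have hle : #(G.neighborFinset v ∩ activation G τ X t) ≤ #(G.neighborFinset v \ C) :=
      Finset.card_le_card fun w hw =>
        Finset.mem_sdiff.2 ⟨(Finset.mem_inter.1 hw).1,
          Finset.disjoint_left.1 ih (Finset.mem_inter.1 hw).2⟩
    have hτ := (Finset.mem_filter.1 hact).2
    have := hC v hv
    omega

theorem not_disjoint_of_isTargetSet {τ : V → ℤ} {C X : Finset V} (hne : C.Nonempty)
    (hC : ∀ v ∈ C, (#(G.neighborFinset v \ C) : ℤ) < τ v) (hX : IsTargetSet G τ X) :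
    ¬ Disjoint X C := by
  intro hdisj
  obtain ⟨t₀, ht₀⟩ := hX
  have := G.disjoint_activation_of_card_neighborFinset_sdiff_lt hC hdisj t₀
  rw [ht₀ t₀ le_rfl] at this
  obtain ⟨v, hv⟩ := hne
  exact Finset.disjoint_left.1 this (Finset.mem_univ v) hv

theorem card_neighborFinset_sdiff_closedNbhdFinset_lt {τ : V → ℤ} {U : Finset V}
    (hone : ∀ u ∈ U, τ u = 1)
    (hboundary : ∀ u ∈ U, ∀ v, G.Adj u v → v ∉ U → τ v = G.degree v) :
    ∀ v ∈ closedNbhdFinset G U,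
      (#(G.neighborFinset v \ closedNbhdFinset G U) : ℤ) < τ v := by
  intro v hv
  have hmem : ∀ {u w}, u ∈ U → G.Adj u w → w ∈ closedNbhdFinset G U := fun hu huw =>
    Finset.mem_union_right _ (Finset.mem_filter.2 ⟨Finset.mem_univ _, _, hu, huw⟩)
  by_cases hvU : v ∈ U
  · have hempty : G.neighborFinset v \ closedNbhdFinset G U = ∅ :=
      Finset.sdiff_eq_empty_iff_subset.2 fun w hw => hmem hvU ((G.mem_neighborFinset v w).1 hw)
    simp [hempty, hone v hvU]
  · obtain ⟨u, huU, huv⟩ : ∃ u ∈ U, G.Adj u v := by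
      simpa [closedNbhdFinset, hvU] using hv
    have hlt : #(G.neighborFinset v \ closedNbhdFinset G U) < #(G.neighborFinset v) :=
      Finset.card_lt_card ⟨Finset.sdiff_subset, fun h =>
        (Finset.mem_sdiff.1 (h ((G.mem_neighborFinset v u).2 huv.symm))).2
          (Finset.mem_union_left _ huU)⟩
    rw [hboundary u huU v huv hvU, ← G.card_neighborFinset_eq_degree]
    exact_mod_cast hlt

end SimpleGraph

theorem stmt_8_general {V : Type*} [Fintype V] [DecidableEq V] (G : SimpleGraph V)
    [DecidableRel G.Adj] (τ : V → ℤ)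
    (hτ : ∀ u, τ u = 0 ∨ τ u = 1 ∨ τ u = (G.degree u : ℤ))
    (U : Finset V)
    (hU : IsComponentOf G {u | τ u = 0 ∨ τ u = 1} ↑U)
    (hone : ∀ u ∈ U, τ u = 1)
    (X : Finset V) (hX : IsTargetSet G τ X) :
    (X ∩ closedNbhdFinset G U).Nonempty := by
  obtain ⟨-, hUne, -, hclosed⟩ := hU
  have hboundary : ∀ u ∈ U, ∀ v, G.Adj u v → v ∉ U → τ v = G.degree v := fun u hu v huv hvU =>
    (hτ v).resolve_left (fun h => hvU (hclosed u hu v (Or.inl h) huv))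
      |>.resolve_left (fun h => hvU (hclosed u hu v (Or.inr h) huv))
  have hne : (closedNbhdFinset G U).Nonempty :=
    (Finset.coe_nonempty.1 hUne).mono Finset.subset_union_left
  exact Finset.not_disjoint_iff_nonempty_inter.1 <| G.not_disjoint_of_isTargetSet hne
    (G.card_neighborFinset_sdiff_closedNbhdFinset_lt hone hboundary) hX

theorem stmt_8 {V : Type*} [Fintype V] [DecidableEq V] (G : SimpleGraph V)
    [DecidableRel G.Adj] (τ : V → ℤ)
    (hτ : ∀ u, τ u = 0 ∨ τ u = 1 ∨ τ u = (G.degree u : ℤ))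
    (hedge : ∀ u v, G.Adj u v →
      ¬ (τ u = (G.degree u : ℤ) ∧ τ v = (G.degree v : ℤ)))
    (U : Finset V)
    (hU : IsComponentOf G {u | τ u = 0 ∨ τ u = 1} ↑U)
    (hcard : 2 ≤ U.card)
    (hone : ∀ u ∈ U, τ u = 1)
    (X : Finset V) (hX : IsTargetSet G τ X) :
    (X ∩ closedNbhdFinset G U).Nonempty :=
  stmt_8_general G τ hτ U hU hone X hX
end

section
/- Let G be a finite graph, τ a threshold function, and u a vertex with τ(u)=1 such that every neighbour v of u satisfies τ(v)=deg_G(v). Suppose u has neighbours v₁ and v₂ such that, in the activation process starting at X₀, we have {v₁} ∪ N_G(v₂) ⊆ X_t for some t. Then {v₂} ∪ N_G(v₁) ⊆ X_{t+1} and {v₁} ∪ N_G(v₂) ⊆ X_{t+2}; consequently u ∈ X_s for every s ≥ t+1. -/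
open Finset

/-!
Both `v₁` and `v₂` have threshold equal to their degree and all of their neighbours have threshold
at most one. Hence once `v₁` and all neighbours of `v₂` are active, one step later `v₂` (whose
whole neighbourhood is active) and all neighbours of `v₁` (which see the active `v₁`) are active,
and by symmetry the configuration keeps alternating forever. So from time `t` on one of `v₁, v₂`
is always active, and `u`, of threshold one and adjacent to both, is active from time `t + 1` on.
-/

section Activation

variable {V : Type*} [Fintype V] [DecidableEq V] {G : SimpleGraph V} [DecidableRel G.Adj]
  {τ : V → ℤ} {X : Finset V}

theorem mem_activation_succ {v : V} {t : ℕ} :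
    v ∈ activation G τ X (t + 1) ↔ τ v ≤ #(G.neighborFinset v ∩ activation G τ X t) := by
  simp [activation]

theorem mem_activation_succ_of_neighborFinset_subset {v : V} {t : ℕ} (hv : τ v ≤ G.degree v)
    (h : G.neighborFinset v ⊆ activation G τ X t) : v ∈ activation G τ X (t + 1) := by
  rwa [mem_activation_succ, inter_eq_left.mpr h, SimpleGraph.card_neighborFinset_eq_degree]

theorem mem_activation_succ_of_adj {v w : V} {t : ℕ} (hv : τ v ≤ 1) (hvw : G.Adj v w)
    (hw : w ∈ activation G τ X t) : v ∈ activation G τ X (t + 1) := by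
  rw [mem_activation_succ]
  have : 0 < #(G.neighborFinset v ∩ activation G τ X t) :=
    card_pos.mpr ⟨w, mem_inter.mpr ⟨(G.mem_neighborFinset v w).mpr hvw, hw⟩⟩
  omega

theorem insert_neighborFinset_subset_activation_succ {a b : V} {t : ℕ}
    (hb : τ b ≤ G.degree b) (ha : ∀ w, G.Adj a w → τ w ≤ 1)
    (h : insert a (G.neighborFinset b) ⊆ activation G τ X t) :
    insert b (G.neighborFinset a) ⊆ activation G τ X (t + 1) := by
  intro w hw
  rcases mem_insert.mp hw with rfl | hw
  · exact mem_activation_succ_of_neighborFinset_subset hb ((subset_insert _ _).trans h)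
  · have haw := (G.mem_neighborFinset a w).mp hw
    exact mem_activation_succ_of_adj (ha w haw) haw.symm (h (mem_insert_self a _))

theorem insert_neighborFinset_subset_activation_or {a b : V} {t : ℕ}
    (ha : τ a ≤ G.degree a) (hb : τ b ≤ G.degree b)
    (hNa : ∀ w, G.Adj a w → τ w ≤ 1) (hNb : ∀ w, G.Adj b w → τ w ≤ 1)
    (h : insert a (G.neighborFinset b) ⊆ activation G τ X t) :
    ∀ s ≥ t, insert a (G.neighborFinset b) ⊆ activation G τ X s ∨
      insert b (G.neighborFinset a) ⊆ activation G τ X s := by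
  intro s hs
  induction s, hs using Nat.le_induction with
  | base => exact .inl h
  | succ s _ ih =>
    rcases ih with hab | hba
    · exact .inr (insert_neighborFinset_subset_activation_succ hb hNa hab)
    · exact .inl (insert_neighborFinset_subset_activation_succ ha hNb hba)

end Activation

theorem stmt_11 {V : Type*} [Fintype V] [DecidableEq V] (G : SimpleGraph V)
    [DecidableRel G.Adj] (τ : V → ℤ) (X₀ : Finset V) (u v₁ v₂ : V) (t : ℕ)
    (hu : τ u = 1)
    (hnb : ∀ v, G.Adj u v → τ v = (G.degree v : ℤ))
    (hctx : ∀ w, (G.Adj v₁ w ∨ G.Adj v₂ w) → τ w = 0 ∨ τ w = 1)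
    (h1 : G.Adj u v₁) (h2 : G.Adj u v₂)
    (ht : insert v₁ (G.neighborFinset v₂) ⊆ activation G τ X₀ t) :
    insert v₂ (G.neighborFinset v₁) ⊆ activation G τ X₀ (t + 1) ∧
    insert v₁ (G.neighborFinset v₂) ⊆ activation G τ X₀ (t + 2) ∧
    ∀ s ≥ t + 1, u ∈ activation G τ X₀ s := by
  have hv₁ := (hnb v₁ h1).le
  have hv₂ := (hnb v₂ h2).le
  have hN₁ (w : V) (hw : G.Adj v₁ w) : τ w ≤ 1 := by rcases hctx w (.inl hw) with h | h <;> omega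
  have hN₂ (w : V) (hw : G.Adj v₂ w) : τ w ≤ 1 := by rcases hctx w (.inr hw) with h | h <;> omega
  have hstep₁ := insert_neighborFinset_subset_activation_succ hv₂ hN₁ ht
  refine ⟨hstep₁, insert_neighborFinset_subset_activation_succ hv₁ hN₂ hstep₁, ?_⟩
  intro s hs
  obtain ⟨s, rfl⟩ : ∃ s', s = s' + 1 := ⟨s - 1, by omega⟩
  rcases insert_neighborFinset_subset_activation_or hv₁ hv₂ hN₁ hN₂ ht s (by omega) with h | h
  · exact mem_activation_succ_of_adj hu.le h1 (h (mem_insert_self _ _))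
  · exact mem_activation_succ_of_adj hu.le h2 (h (mem_insert_self _ _))
end
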